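/- For all c ∈ ℝ, h > 0, θ ∈ ℝ and every λ ∈ ℂ, the characteristic polynomial of the block symbol factors as det(λ·I − Ĝ(θ)) = (λ − Q̂₁(θ))(λ − Q̂₂(θ)); in particular Q̂₁(θ) and Q̂₂(θ) are the two eigenvalues of Ĝ(θ). -/
import Mathlib


open Complex Matrix

/-- The block `A` of the two-point-block BFD approximation of `∂²/∂x²`. -/
noncomputable def Amat (c h : ℝ) : Matrix (Fin 2) (Fin 2) ℂ :=
  (1/(3*(h:ℂ)^2)) • !![(-1+(c:ℂ)), 16-5*(c:ℂ); -(c:ℂ), -1+5*(c:ℂ)]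

/-- The block `B` of the two-point-block BFD approximation of `∂²/∂x²`. -/
noncomputable def Bmat (c h : ℝ) : Matrix (Fin 2) (Fin 2) ℂ :=
  (1/(3*(h:ℂ)^2)) • !![(-30+10*(c:ℂ)), 16-10*(c:ℂ); 16-10*(c:ℂ), -30+10*(c:ℂ)]

/-- The block `C` of the two-point-block BFD approximation of `∂²/∂x²`. -/
noncomputable def Cmat (c h : ℝ) : Matrix (Fin 2) (Fin 2) ℂ :=
  (1/(3*(h:ℂ)^2)) • !![(-1+5*(c:ℂ)), -(c:ℂ); 16-5*(c:ℂ), -1+(c:ℂ)]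

/-- The 2×2 complex block symbol `Ĝ(θ) = A e^{-iθ} + B + C e^{iθ}`. -/
noncomputable def Ghat (c h θ : ℝ) : Matrix (Fin 2) (Fin 2) ℂ :=
  Complex.exp (-I*θ) • Amat c h + Bmat c h + Complex.exp (I*θ) • Cmat c h

/-- `Ω(θ) = −cos(θ/2)(16 − (7 + cos θ)c)`. -/
noncomputable def Om (c θ : ℝ) : ℝ :=
  -Real.cos (θ/2) * (16 - (7 + Real.cos θ)*c)

/-- `Δ(θ) = √(Ω(θ)² + 4c² sin⁶(θ/2))`. -/
noncomputable def Del (c θ : ℝ) : ℝ :=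
  Real.sqrt ((Om c θ)^2 + 4*c^2*(Real.sin (θ/2))^6)

/-- The symbol `Q̂₁(θ)`. -/
noncomputable def Qhat1 (c h θ : ℝ) : ℝ :=
  (2/(3*h^2)) * (-(15 + Real.cos θ) + (5 + 3*Real.cos θ)*c + Del c θ)

/-- The symbol `Q̂₂(θ)`. -/
noncomputable def Qhat2 (c h θ : ℝ) : ℝ :=
  (2/(3*h^2)) * (-(15 + Real.cos θ) + (5 + 3*Real.cos θ)*c - Del c θ)

/-- The characteristic polynomial of the block symbol factors as
`det(λ·I − Ĝ(θ)) = (λ − Q̂₁(θ))(λ − Q̂₂(θ))`. -/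
theorem charpoly_Ghat_factors (c h θ : ℝ) (hh : 0 < h) (lam : ℂ) :
    (lam • (1 : Matrix (Fin 2) (Fin 2) ℂ) - Ghat c h θ).det
      = (lam - (Qhat1 c h θ : ℂ)) * (lam - (Qhat2 c h θ : ℂ)) := by
  have hh0 : (h:ℂ) ≠ 0 := by exact_mod_cast hh.ne'
  have hDelSq : (Del c θ)^2
      = ((1 + Real.cos θ)/2)*(16-(7+Real.cos θ)*c)^2
        + 4*c^2*((1 - Real.cos θ)/2)^3 := by
    have h0 : (Del c θ)^2 = (Om c θ)^2 + 4*c^2*(Real.sin (θ/2))^6 :=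
      Real.sq_sqrt (by positivity)
    have hc2 : Real.cos (θ/2)^2 = 1/2 + Real.cos θ/2 := by
      have h := Real.cos_sq (θ/2); rwa [show 2*(θ/2)=θ by ring] at h
    have hs2 : Real.sin (θ/2)^2 = 1/2 - Real.cos θ/2 := by
      have h1 := Real.sin_sq (θ/2)
      rw [h1, hc2]; ring
    rw [h0, Om]
    have e1 : (-Real.cos (θ/2) * (16 - (7 + Real.cos θ)*c))^2
        = (Real.cos (θ/2)^2) * (16 - (7 + Real.cos θ)*c)^2 := by ring
    have e2 : (Real.sin (θ/2))^6 = (Real.sin (θ/2)^2)^3 := by ring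
    rw [e1, e2, hc2, hs2]; ring
  have hD : ((Del c θ : ℝ):ℂ)^2
      = ((1 + (Real.cos θ:ℂ))/2)*(16-(7+(Real.cos θ:ℂ))*(c:ℂ))^2
        + 4*(c:ℂ)^2*((1 - (Real.cos θ:ℂ))/2)^3 := by
    exact_mod_cast congrArg (fun r : ℝ => (r:ℂ)) hDelSq
  have hs : ((Real.sin θ:ℂ))^2 = 1 - ((Real.cos θ:ℂ))^2 := by
    have := Real.sin_sq θ; exact_mod_cast this
  have hE : Complex.exp (I*θ) = (Real.cos θ:ℂ) + (Real.sin θ:ℂ)*I := by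
    rw [mul_comm, Complex.exp_mul_I, Complex.ofReal_cos, Complex.ofReal_sin]
  have hE' : Complex.exp (-(I*θ)) = (Real.cos θ:ℂ) - (Real.sin θ:ℂ)*I := by
    rw [show (-(I*(θ:ℂ))) = ((-θ:ℝ):ℂ)*I by push_cast; ring, Complex.exp_mul_I,
      Complex.ofReal_cos, Complex.ofReal_sin]
    push_cast
    rw [Complex.cos_neg, Complex.sin_neg]; ring
  have hE'' : Complex.exp (-I*θ) = (Real.cos θ:ℂ) - (Real.sin θ:ℂ)*I := by
    rw [← hE']; ring_nf
  simp [Ghat, Amat, Bmat, Cmat, Matrix.det_fin_two, hE, hE', hE'', Qhat1, Qhat2,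
    Matrix.smul_apply, Matrix.sub_apply, Matrix.add_apply, Matrix.one_apply]
  push_cast at hD hs ⊢
  linear_combination (4/(9*(h:ℂ)^4)) * hD + (128*((c:ℂ)-2)/(9*(h:ℂ)^4)) * hs
    + (Complex.sin θ^2*(256-128*(c:ℂ))/(9*(h:ℂ)^4)) * Complex.I_sq
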